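/- arXiv:1904.05856 — 5 statements merged into one kernel-verified Lean document; each statement's English description precedes it below -/
import Mathlib

section
/- The gradient flow update law for the algebraic (linear regression) error model achieves constant (O(1)) continuous-time regret: for every time horizon T ≥ 0, ∫₀^T e_y(t)² dt ≤ ‖θ(0) − θ*‖² / (2γ); in particular the bound is independent of T. -/
open scoped RealInnerProductSpace

/-!
Along the gradient flow the Lyapunov function `V t = ‖θ t - θ*‖²` satisfies
`V' = -2γ e_y²`, so integrating over `[0, T]` gives `2γ ∫₀ᵀ e_y² = V 0 - V T ≤ V 0`.
-/

open Set

theorem hasDerivAt_norm_sub_sq_of_hasDerivAt_gradient_flow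
    {E : Type*} [NormedAddCommGroup E] [InnerProductSpace ℝ E]
    {θ : ℝ → E} {θstar φ : E} {γ t : ℝ}
    (hθ : HasDerivAt θ (-(γ * ⟪θ t - θstar, φ⟫) • φ) t) :
    HasDerivAt (fun s => ‖θ s - θstar‖ ^ 2) (-(2 * γ * ⟪θ t - θstar, φ⟫ ^ 2)) t := by
  convert (hθ.sub_const θstar).norm_sq using 1
  rw [real_inner_smul_right]
  ring

theorem intervalIntegral.integral_le_of_hasDerivAt_neg {V f : ℝ → ℝ} {a b : ℝ}
    (hV : ∀ t ∈ uIcc a b, HasDerivAt V (-f t) t)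
    (hf : IntervalIntegrable f MeasureTheory.volume a b) (hVb : 0 ≤ V b) :
    ∫ t in a..b, f t ≤ V a := by
  have hFTC := integral_eq_sub_of_hasDerivAt hV hf.neg
  rw [integral_neg] at hFTC
  linarith

/-- The gradient flow update law `θ̇(t) = -γ e_y(t) φ(t)` for the algebraic
(linear regression) error model achieves constant (O(1)) continuous-time regret:
for every `T ≥ 0`, `∫₀ᵀ e_y(t)² dt ≤ ‖θ(0) - θ*‖² / (2γ)`, a bound independent
of `T`. -/
theorem gradient_flow_constant_regret
    {N : ℕ} (γ : ℝ) (hγ : 0 < γ)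
    (θstar : EuclideanSpace ℝ (Fin N))
    (φ θ : ℝ → EuclideanSpace ℝ (Fin N))
    (hφ : Continuous φ)
    (ey : ℝ → ℝ)
    (hey : ∀ t, ey t = ⟪θ t - θstar, φ t⟫)
    (hθ : ∀ t, 0 ≤ t → HasDerivAt θ ((-(γ * ey t)) • φ t) t) :
    ∀ T : ℝ, 0 ≤ T → ∫ t in (0:ℝ)..T, (ey t) ^ 2 ≤ ‖θ 0 - θstar‖ ^ 2 / (2 * γ) := by
  intro T hT
  have hV : ∀ t ∈ uIcc 0 T,
      HasDerivAt (fun s => ‖θ s - θstar‖ ^ 2) (-(2 * γ * ey t ^ 2)) t := by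
    intro t ht
    have hθt := hθ t (uIcc_of_le hT ▸ ht).1
    rw [hey t] at hθt ⊢
    exact hasDerivAt_norm_sub_sq_of_hasDerivAt_gradient_flow hθt
  have hey_cont : ContinuousOn ey (uIcc 0 T) := by
    have hθ_cont : ContinuousOn θ (uIcc 0 T) := fun t ht =>
      (hθ t (uIcc_of_le hT ▸ ht).1).continuousAt.continuousWithinAt
    exact ((hθ_cont.sub continuousOn_const).inner hφ.continuousOn).congr fun t _ => hey t
  have hregret := intervalIntegral.integral_le_of_hasDerivAt_neg hV
    (continuousOn_const.mul (hey_cont.pow 2)).intervalIntegrable (by positivity)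
  rw [intervalIntegral.integral_const_mul] at hregret
  rw [le_div_iff₀ (by positivity)]
  linarith
end

section
/- Under the gradient flow update law for the algebraic (linear regression) error model, the average continuous-time regret tends to zero: (1/T) ∫₀^T e_y(t)² dt ≤ ‖θ(0) − θ*‖²/(2γT) for all T > 0, and hence (1/T) ∫₀^T e_y(t)² dt → 0 as T → ∞. -/
/-!
Along the gradient flow, `V(t) = ‖θ(t) - θ*‖²` is a Lyapunov function with
`V' = -2γ e_y²`. Integrating, `2γ ∫₀ᵀ e_y² = V(0) - V(T) ≤ V(0)`, and dividing by `T` gives the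
bound, which is `O(1/T)`. The fundamental theorem of calculus applies without any regularity
assumption on `e_y²`: a nonnegative derivative is automatically integrable.
-/

open scoped RealInnerProductSpace
open Set Filter

theorem intervalIntegral.integral_eq_sub_of_hasDerivAt_of_nonneg {g g' : ℝ → ℝ} {a b : ℝ}
    (hab : a ≤ b) (hderiv : ∀ x ∈ Icc a b, HasDerivAt g (g' x) x)
    (hpos : ∀ x ∈ Ioo a b, 0 ≤ g' x) :
    ∫ x in a..b, g' x = g b - g a := by
  rw [← uIcc_of_le hab] at hderiv
  refine integral_eq_sub_of_hasDerivAt hderiv (intervalIntegrable_deriv_of_nonneg (g := g) ?_ ?_ ?_)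
  · exact HasDerivAt.continuousOn hderiv
  · simpa only [min_eq_left hab, max_eq_right hab] using
      fun x hx => hderiv x (Ioo_subset_Icc_self hx)
  · simpa only [min_eq_left hab, max_eq_right hab] using hpos

section GradientFlow

variable {E : Type*} [NormedAddCommGroup E] [InnerProductSpace ℝ E]

theorem hasDerivAt_norm_sq_sub_of_gradientFlow {θ : ℝ → E} {θstar v : E} {γ t : ℝ}
    (hθ : HasDerivAt θ (-(γ * ⟪θ t - θstar, v⟫) • v) t) :
    HasDerivAt (fun s => ‖θ s - θstar‖ ^ 2) (-(2 * γ) * ⟪θ t - θstar, v⟫ ^ 2) t := by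
  convert (hθ.sub_const θstar).norm_sq using 1
  rw [real_inner_smul_right]
  ring

theorem integral_sq_le_of_gradientFlow {γ T : ℝ} (hγ : 0 < γ) (hT : 0 ≤ T) {θstar : E}
    {φ θ : ℝ → E} {ey : ℝ → ℝ} (hey : ∀ t, ey t = ⟪θ t - θstar, φ t⟫)
    (hθ : ∀ t, 0 ≤ t → HasDerivAt θ (-(γ * ey t) • φ t) t) :
    ∫ t in (0:ℝ)..T, ey t ^ 2 ≤ ‖θ 0 - θstar‖ ^ 2 / (2 * γ) := by
  have hV : ∀ t ∈ Icc 0 T,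
      HasDerivAt (fun s => -‖θ s - θstar‖ ^ 2 / (2 * γ)) (ey t ^ 2) t := by
    intro t ht
    have h := hasDerivAt_norm_sq_sub_of_gradientFlow (hey t ▸ hθ t ht.1)
    refine (h.neg.div_const (2 * γ)).congr_deriv ?_
    rw [hey t]
    field_simp
  rw [intervalIntegral.integral_eq_sub_of_hasDerivAt_of_nonneg hT hV fun t _ => sq_nonneg _]
  have hVT : 0 ≤ ‖θ T - θstar‖ ^ 2 / (2 * γ) := by positivity
  rw [neg_div, neg_div]
  linarith

end GradientFlow

theorem gradient_flow_average_regret_to_zero_general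
    {N : ℕ} (γ : ℝ) (hγ : 0 < γ)
    (θstar : EuclideanSpace ℝ (Fin N))
    (φ θ : ℝ → EuclideanSpace ℝ (Fin N))
    (ey : ℝ → ℝ)
    (hey : ∀ t, ey t = ⟪θ t - θstar, φ t⟫)
    (hθ : ∀ t, 0 ≤ t → HasDerivAt θ ((-(γ * ey t)) • φ t) t) :
    (∀ T : ℝ, 0 < T →
      (1 / T) * ∫ t in (0:ℝ)..T, (ey t) ^ 2 ≤ ‖θ 0 - θstar‖ ^ 2 / (2 * γ * T)) ∧
    Filter.Tendsto (fun T : ℝ => (1 / T) * ∫ t in (0:ℝ)..T, (ey t) ^ 2)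
      Filter.atTop (nhds 0) := by
  have hbound : ∀ T : ℝ, 0 < T →
      (1 / T) * ∫ t in (0:ℝ)..T, (ey t) ^ 2 ≤ ‖θ 0 - θstar‖ ^ 2 / (2 * γ * T) := by
    intro T hT
    rw [one_div_mul_eq_div, ← div_div]
    exact div_le_div_of_nonneg_right (integral_sq_le_of_gradientFlow hγ hT.le hey hθ) hT.le
  refine ⟨hbound, squeeze_zero' (g := fun T => ‖θ 0 - θstar‖ ^ 2 / (2 * γ * T)) ?_ ?_ ?_⟩
  · filter_upwards [eventually_gt_atTop 0] with T hT
    exact mul_nonneg (by positivity)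
      (intervalIntegral.integral_nonneg hT.le fun t _ => sq_nonneg _)
  · filter_upwards [eventually_gt_atTop 0] using hbound
  · exact tendsto_const_nhds.div_atTop (tendsto_id.const_mul_atTop (by positivity))

/-- Under the gradient flow update law `θ̇(t) = -γ e_y(t) φ(t)` for the algebraic
(linear regression) error model, the average continuous-time regret tends to zero:
`(1/T) ∫₀ᵀ e_y(t)² dt ≤ ‖θ(0) - θ*‖²/(2γT)` for all `T > 0`, and hence
`(1/T) ∫₀ᵀ e_y(t)² dt → 0` as `T → ∞`. -/
theorem gradient_flow_average_regret_to_zero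
    {N : ℕ} (γ : ℝ) (hγ : 0 < γ)
    (θstar : EuclideanSpace ℝ (Fin N))
    (φ θ : ℝ → EuclideanSpace ℝ (Fin N))
    (hφ : Continuous φ)
    (ey : ℝ → ℝ)
    (hey : ∀ t, ey t = ⟪θ t - θstar, φ t⟫)
    (hθ : ∀ t, 0 ≤ t → HasDerivAt θ ((-(γ * ey t)) • φ t) t) :
    (∀ T : ℝ, 0 < T →
      (1 / T) * ∫ t in (0:ℝ)..T, (ey t) ^ 2 ≤ ‖θ 0 - θstar‖ ^ 2 / (2 * γ * T)) ∧
    Filter.Tendsto (fun T : ℝ => (1 / T) * ∫ t in (0:ℝ)..T, (ey t) ^ 2)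
      Filter.atTop (nhds 0) :=
  gradient_flow_average_regret_to_zero_general γ hγ θstar φ θ ey hey hθ
end

section
/- For the dynamical error model with the strictly-positive-real (KYP) conditions AᵀP + PA = −Q and Pb = cᵀ, and the gradient update law θ̇ = −γ φ̂ e_y, the Lyapunov function V(t) = γ⁻¹‖θ(t) − θ*‖² + e(t)ᵀP e(t) + α φ̃(t)ᵀP̄ φ̃(t) satisfies the derivative identity V̇(t) = −e(t)ᵀQ e(t) − α φ̃(t)ᵀQ̄ φ̃(t) + 2 e(t)ᵀP b (θ*ᵀφ̃(t)) for all t ≥ t₀. -/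
/-!
Differentiate the three quadratic terms of `V` separately. In the `e` and `φ̃` terms the drift
parts combine, through `AᵀP + PA = -Q` and `Λᵀ P̄ + P̄ Λ = -Q̄`, into `-eᵀQe` and `-α φ̃ᵀQ̄φ̃`.
Since `Pb = cᵀ` and `P` is symmetric, the input term `(θ - θ*)ᵀφ̂ b` of `ė` contributes
`2 e_y (θ - θ*)ᵀφ̂`, which is cancelled exactly by the contribution `-2 e_y (θ - θ*)ᵀφ̂` of the
parameter error under the update law `θ̇ = -γ φ̂ e_y`.
-/

open Matrix

section Derivatives

variable {𝕜 ι : Type*} [NontriviallyNormedField 𝕜] [Fintype ι]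

theorem HasDerivAt.dotProduct {f g : 𝕜 → ι → 𝕜} {f' g' : ι → 𝕜} {t : 𝕜}
    (hf : HasDerivAt f f' t) (hg : HasDerivAt g g' t) :
    HasDerivAt (fun s => f s ⬝ᵥ g s) (f' ⬝ᵥ g t + f t ⬝ᵥ g') t := by
  have h := HasDerivAt.fun_sum (u := Finset.univ) fun i _ =>
    (hasDerivAt_pi.mp hf i).mul (hasDerivAt_pi.mp hg i)
  simpa only [_root_.dotProduct, Pi.mul_apply, ← Finset.sum_add_distrib] using h

theorem HasDerivAt.const_mulVec (M : Matrix ι ι 𝕜) {f : 𝕜 → ι → 𝕜} {f' : ι → 𝕜} {t : 𝕜}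
    (hf : HasDerivAt f f' t) : HasDerivAt (fun s => M *ᵥ f s) (M *ᵥ f') t :=
  hasDerivAt_pi.mpr fun i => by
    have h := (hasDerivAt_const t (M i)).dotProduct hf
    rwa [zero_dotProduct, zero_add] at h

theorem HasDerivAt.dotProduct_mulVec_self (M : Matrix ι ι 𝕜) {x : 𝕜 → ι → 𝕜} {x' : ι → 𝕜}
    {t : 𝕜} (hx : HasDerivAt x x' t) :
    HasDerivAt (fun s => x s ⬝ᵥ M *ᵥ x s) (x' ⬝ᵥ M *ᵥ x t + x t ⬝ᵥ M *ᵥ x') t :=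
  hx.dotProduct (hx.const_mulVec M)

end Derivatives

theorem Matrix.mulVec_dotProduct_add_dotProduct_mulVec_of_lyapunov {R ι : Type*} [CommRing R]
    [Fintype ι] {A P Q : Matrix ι ι R} (hLyap : Aᵀ * P + P * A = -Q) (x : ι → R) :
    A *ᵥ x ⬝ᵥ P *ᵥ x + x ⬝ᵥ P *ᵥ (A *ᵥ x) = -(x ⬝ᵥ Q *ᵥ x) := by
  rw [dotProduct_comm, ← dotProduct_transpose_mulVec, mulVec_mulVec, mulVec_mulVec,
    ← dotProduct_add, ← add_mulVec, hLyap, neg_mulVec, dotProduct_neg]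

theorem HasDerivAt.dotProduct_mulVec_self_of_lyapunov {ι : Type*} [Fintype ι]
    {A P Q : Matrix ι ι ℝ} (hLyap : Aᵀ * P + P * A = -Q) {x : ℝ → ι → ℝ} {w : ι → ℝ} {t : ℝ}
    (hx : HasDerivAt x (A *ᵥ x t + w) t) :
    HasDerivAt (fun s => x s ⬝ᵥ P *ᵥ x s)
      (-(x t ⬝ᵥ Q *ᵥ x t) + (w ⬝ᵥ P *ᵥ x t + x t ⬝ᵥ P *ᵥ w)) t := by
  refine (hx.dotProduct_mulVec_self P).congr_deriv ?_
  rw [← mulVec_dotProduct_add_dotProduct_mulVec_of_lyapunov hLyap, mulVec_add, add_dotProduct,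
    dotProduct_add]
  ring

theorem Matrix.IsSymm.dotProduct_mulVec_comm {R ι : Type*} [CommSemiring R] [Fintype ι]
    {P : Matrix ι ι R} (hP : P.IsSymm) (x y : ι → R) : x ⬝ᵥ P *ᵥ y = y ⬝ᵥ P *ᵥ x := by
  rw [← dotProduct_transpose_mulVec, hP.eq]

theorem kyp_lyapunov_derivative_identity_general
    {n N : ℕ} (t₀ γ α : ℝ) (hγ : 0 < γ)
    (A : Matrix (Fin n) (Fin n) ℝ) (b c : Fin n → ℝ)
    (P Q : Matrix (Fin n) (Fin n) ℝ)
    (hPsym : P.IsSymm)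
    (hLyap : Aᵀ * P + P * A = -Q) (hPb : P.mulVec b = c)
    (Λ Pbar Qbar : Matrix (Fin N) (Fin N) ℝ)
    (hLyapBar : Λᵀ * Pbar + Pbar * Λ = -Qbar)
    (θstar : Fin N → ℝ)
    (e : ℝ → Fin n → ℝ) (θ φhat φtil : ℝ → Fin N → ℝ)
    (ey : ℝ → ℝ) (hey : ∀ t, ey t = c ⬝ᵥ e t)
    (hde : ∀ t, t₀ ≤ t → HasDerivAt e
      (A.mulVec (e t) + ((θ t - θstar) ⬝ᵥ φhat t) • b + (θstar ⬝ᵥ φtil t) • b) t)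
    (hdφ : ∀ t, t₀ ≤ t → HasDerivAt φtil (Λ.mulVec (φtil t)) t)
    (hdθ : ∀ t, t₀ ≤ t → HasDerivAt θ ((-(γ * ey t)) • φhat t) t)
    (V : ℝ → ℝ)
    (hV : ∀ t, V t = γ⁻¹ * ((θ t - θstar) ⬝ᵥ (θ t - θstar))
      + e t ⬝ᵥ P.mulVec (e t) + α * (φtil t ⬝ᵥ Pbar.mulVec (φtil t))) :
    ∀ t, t₀ ≤ t → HasDerivAt V
      (-(e t ⬝ᵥ Q.mulVec (e t)) - α * (φtil t ⬝ᵥ Qbar.mulVec (φtil t))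
        + 2 * (e t ⬝ᵥ P.mulVec b) * (θstar ⬝ᵥ φtil t)) t := by
  intro t ht
  have hθerr := (hdθ t ht).sub_const θstar
  have he : HasDerivAt e (A *ᵥ e t + ((θ t - θstar) ⬝ᵥ φhat t + θstar ⬝ᵥ φtil t) • b) t := by
    simpa only [add_smul, add_assoc] using hde t ht
  have hφ : HasDerivAt φtil (Λ *ᵥ φtil t + 0) t := by simpa only [add_zero] using hdφ t ht
  have hsum := (((hθerr.dotProduct hθerr).const_mul γ⁻¹).add
    (he.dotProduct_mulVec_self_of_lyapunov hLyap)).add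
    ((hφ.dotProduct_mulVec_self_of_lyapunov hLyapBar).const_mul α)
  rw [show V = _ from funext hV]
  refine hsum.congr_deriv ?_
  have hey' : ey t = e t ⬝ᵥ P *ᵥ b := by rw [hey, hPb, dotProduct_comm]
  simp only [smul_dotProduct, dotProduct_smul, mulVec_smul, mulVec_zero, dotProduct_zero,
    zero_dotProduct, smul_eq_mul, hPsym.dotProduct_mulVec_comm b (e t),
    dotProduct_comm (φhat t), ← hey']
  field_simp
  ring

/-- For the dynamical error model with the strictly-positive-real (KYP) conditions
`AᵀP + PA = -Q`, `Pb = cᵀ`, and the gradient update law `θ̇ = -γ φ̂ e_y`, the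
Lyapunov function `V(t) = γ⁻¹‖θ(t) - θ*‖² + e(t)ᵀP e(t) + α φ̃(t)ᵀP̄ φ̃(t)`
satisfies `V̇(t) = -e(t)ᵀQ e(t) - α φ̃(t)ᵀQ̄ φ̃(t) + 2 e(t)ᵀP b (θ*ᵀφ̃(t))`
for all `t ≥ t₀`. -/
theorem kyp_lyapunov_derivative_identity
    {n N : ℕ} (t₀ γ α : ℝ) (hγ : 0 < γ) (hα : 0 < α)
    (A : Matrix (Fin n) (Fin n) ℝ) (b c : Fin n → ℝ)
    (P Q : Matrix (Fin n) (Fin n) ℝ)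
    (hPsym : P.IsSymm) (hP : P.PosDef) (hQsym : Q.IsSymm) (hQ : Q.PosDef)
    (hLyap : Aᵀ * P + P * A = -Q) (hPb : P.mulVec b = c)
    (Λ Pbar Qbar : Matrix (Fin N) (Fin N) ℝ)
    (hPbarSym : Pbar.IsSymm) (hPbar : Pbar.PosDef)
    (hQbarSym : Qbar.IsSymm) (hQbar : Qbar.PosDef)
    (hLyapBar : Λᵀ * Pbar + Pbar * Λ = -Qbar)
    (θstar : Fin N → ℝ)
    (e : ℝ → Fin n → ℝ) (θ φhat φtil : ℝ → Fin N → ℝ)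
    (ey : ℝ → ℝ) (hey : ∀ t, ey t = c ⬝ᵥ e t)
    (hde : ∀ t, t₀ ≤ t → HasDerivAt e
      (A.mulVec (e t) + ((θ t - θstar) ⬝ᵥ φhat t) • b + (θstar ⬝ᵥ φtil t) • b) t)
    (hdφ : ∀ t, t₀ ≤ t → HasDerivAt φtil (Λ.mulVec (φtil t)) t)
    (hdθ : ∀ t, t₀ ≤ t → HasDerivAt θ ((-(γ * ey t)) • φhat t) t)
    (V : ℝ → ℝ)
    (hV : ∀ t, V t = γ⁻¹ * ((θ t - θstar) ⬝ᵥ (θ t - θstar))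
      + e t ⬝ᵥ P.mulVec (e t) + α * (φtil t ⬝ᵥ Pbar.mulVec (φtil t))) :
    ∀ t, t₀ ≤ t → HasDerivAt V
      (-(e t ⬝ᵥ Q.mulVec (e t)) - α * (φtil t ⬝ᵥ Qbar.mulVec (φtil t))
        + 2 * (e t ⬝ᵥ P.mulVec b) * (θstar ⬝ᵥ φtil t)) t :=
  kyp_lyapunov_derivative_identity_general t₀ γ α hγ A b c P Q hPsym hLyap hPb Λ Pbar Qbar hLyapBar
    θstar e θ φhat φtil ey hey hde hdφ hdθ V hV
end

section
/- If Λ ∈ ℝ^{N×N} is Hurwitz (every eigenvalue of Λ over ℂ has strictly negative real part), then for every symmetric positive definite Q̄ ∈ ℝ^{N×N} there exists a symmetric positive definite P̄ ∈ ℝ^{N×N} satisfying the Lyapunov equation ΛᵀP̄ + P̄Λ = −Q̄; one such solution is P̄ = ∫₀^∞ exp(Λᵀt) Q̄ exp(Λt) dt. -/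
open Matrix

attribute [local instance] Matrix.normedAddCommGroup Matrix.normedSpace

/-!
Choose `α > 0` such that `Λ + α` is still Hurwitz. Since `exp M` is a polynomial in `M`, the
spectrum of `exp M` lies in `exp '' spectrum M`; so the spectral radius of `exp (Λ + α)` is `< 1`,
its powers are bounded by Gelfand's formula, and `exp (t Λ) = e^{-α t} exp (t (Λ + α))` is
`O(e^{-α t})` as `t → ∞`.

The integrand `f t = exp (t Λᵀ) Q exp (t Λ)` therefore decays exponentially and solves
`f' = Λᵀ f + f Λ`, so `Λᵀ P + P Λ = ∫₀^∞ f' = -f 0 = -Q`. Each `f t` is congruent to `Q`, hence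
positive definite, and so is `P`.
-/

open NormedSpace Filter Set Asymptotics MeasureTheory Topology

section BanachAlgebra

variable {A : Type*} [NormedRing A] [CompleteSpace A]

theorem bddAbove_norm_pow_of_spectralRadius_lt_one [NormedAlgebra ℂ A] {a : A}
    (ha : spectralRadius ℂ a < 1) : BddAbove (range fun n : ℕ => ‖a ^ n‖) := by
  refine IsBoundedUnder.bddAbove_range ⟨1, eventually_map.2 ?_⟩
  filter_upwards [(spectrum.pow_norm_pow_one_div_tendsto_nhds_spectralRadius a).eventually_lt_const
    ha] with n hlt
  rw [ENNReal.ofReal_lt_one] at hlt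
  exact not_lt.1 fun h => hlt.not_ge (Real.one_le_rpow h.le (by positivity))

variable [NormedAlgebra ℝ A]

theorem exists_norm_exp_smul_le_of_bddAbove_norm_pow {b : A}
    (hb : BddAbove (range fun n : ℕ => ‖exp b ^ n‖)) :
    ∃ C, ∀ t : ℝ, 0 ≤ t → ‖exp (t • b)‖ ≤ C := by
  let := NormedAlgebra.restrictScalars ℚ ℝ A
  obtain ⟨D, hD⟩ := hb
  obtain ⟨K, hK⟩ := (isCompact_Icc (a := (0 : ℝ)) (b := 1)).exists_bound_of_continuousOn
    (by fun_prop : Continuous fun s : ℝ => exp (s • b)).continuousOn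
  refine ⟨K * D, fun t ht => ?_⟩
  have hsplit : exp (t • b) = exp ((t - ⌊t⌋₊) • b) * exp b ^ ⌊t⌋₊ := by
    rw [← NormedSpace.exp_nsmul,
      ← NormedSpace.exp_add_of_commute ((Commute.refl b).smul_left _ |>.smul_right _),
      ← Nat.cast_smul_eq_nsmul ℝ, ← add_smul, sub_add_cancel]
  have hfract : t - ⌊t⌋₊ ∈ Icc (0 : ℝ) 1 :=
    ⟨sub_nonneg.2 (Nat.floor_le ht), by linarith [Nat.lt_floor_add_one t]⟩
  calc ‖exp (t • b)‖ ≤ ‖exp ((t - ⌊t⌋₊) • b)‖ * ‖exp b ^ ⌊t⌋₊‖ := hsplit ▸ norm_mul_le _ _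
    _ ≤ K * D := mul_le_mul (hK _ hfract) (hD ⟨_, rfl⟩) (norm_nonneg _)
        ((norm_nonneg _).trans (hK _ hfract))

theorem hasDerivAt_exp_smul_mul_mul_exp_smul (a q b : A) (t : ℝ) :
    HasDerivAt (fun s : ℝ => exp (s • a) * q * exp (s • b))
      (a * (exp (t • a) * q * exp (t • b)) + exp (t • a) * q * exp (t • b) * b) t := by
  let := NormedAlgebra.restrictScalars ℚ ℝ A
  refine (((hasDerivAt_exp_smul_const' a t).mul_const q).mul
    (hasDerivAt_exp_smul_const b t)).congr_deriv ?_
  simp only [mul_assoc]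

end BanachAlgebra

theorem NormedSpace.exp_mem_adjoin_singleton {𝕜 A : Type*} [RCLike 𝕜] [NormedRing A]
    [NormedAlgebra 𝕜 A] [FiniteDimensional 𝕜 A] (a : A) : exp a ∈ Algebra.adjoin 𝕜 {a} :=
  let := NormedAlgebra.restrictScalars ℚ 𝕜 A
  exp_mem (R := 𝕜) (s := Algebra.adjoin 𝕜 {a})
    (Submodule.closed_of_finiteDimensional (Subalgebra.toSubmodule (Algebra.adjoin 𝕜 {a})))
    (Algebra.self_mem_adjoin_singleton 𝕜 a)

namespace Matrix

section LinftyOp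

open scoped Norms.Operator

variable {m n α : Type*} [Fintype m] [Fintype n] [SeminormedAddCommGroup α]

theorem linfty_opNorm_map_eq {β : Type*} [SeminormedAddCommGroup β] (A : Matrix m n α)
    (f : α → β) (hf : ∀ a, ‖f a‖ = ‖a‖) : ‖A.map f‖ = ‖A‖ := by
  have hf' (a : α) : ‖f a‖₊ = ‖a‖₊ := NNReal.eq (hf a)
  simp [linfty_opNorm_def, hf']

theorem norm_entry_le_linfty_opNorm (A : Matrix m n α) (i : m) (j : n) : ‖A i j‖ ≤ ‖A‖ := by
  rw [linfty_opNorm_def]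
  exact_mod_cast (Finset.single_le_sum (f := fun j => ‖A i j‖₊) (fun _ _ => bot_le)
    (Finset.mem_univ j)).trans (Finset.le_sup (f := fun i => ∑ j, ‖A i j‖₊) (Finset.mem_univ i))

theorem _root_.Asymptotics.IsBigO.matrix_apply {X F : Type*} [Norm F] {l : Filter X}
    {f : X → Matrix m n α} {g : X → F} (h : f =O[l] g) (i : m) (j : n) :
    (fun x => f x i j) =O[l] g :=
  (isBigO_of_le l fun x => norm_entry_le_linfty_opNorm (f x) i j).trans h

end LinftyOp

variable {n : Type*} [Fintype n] [DecidableEq n]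

def IsHurwitz (Λ : Matrix n n ℝ) : Prop :=
  ∀ μ ∈ spectrum ℂ (Λ.map (algebraMap ℝ ℂ)), μ.re < 0

theorem IsHurwitz.transpose {Λ : Matrix n n ℝ} (hΛ : Λ.IsHurwitz) : Λᵀ.IsHurwitz := by
  intro μ hμ
  apply hΛ
  rwa [transpose_map, mem_spectrum_iff_isRoot_charpoly, charpoly_transpose,
    ← mem_spectrum_iff_isRoot_charpoly] at hμ

section ExpDecay

open scoped Norms.Operator

theorem exp_mulVec_of_mulVec_eq_smul {M : Matrix n n ℂ} {μ : ℂ} {v : n → ℂ}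
    (hv : M *ᵥ v = μ • v) : exp M *ᵥ v = Complex.exp μ • v := by
  have hpow (k : ℕ) : M ^ k *ᵥ v = μ ^ k • v := by
    induction k with
    | zero => simp
    | succ k ih => rw [pow_succ', ← mulVec_mulVec, ih, mulVec_smul, hv, smul_smul, pow_succ]
  have hM := (exp_series_hasSum_exp' (𝕂 := ℂ) M).mapL
    (LinearMap.toContinuousLinearMap ((mulVecBilin ℂ ℂ).flip v))
  have hμ := (exp_series_hasSum_exp' (𝕂 := ℂ) μ).smul_const v
  rw [← Complex.exp_eq_exp_ℂ] at hμ
  refine hM.unique ?_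
  simpa [hpow, smul_smul] using hμ

theorem spectrum_exp_subset [Nonempty n] (M : Matrix n n ℂ) :
    spectrum ℂ (exp M) ⊆ Complex.exp '' spectrum ℂ M := by
  obtain ⟨p, hp⟩ : exp M ∈ range (Polynomial.aeval M) := by
    have := exp_mem_adjoin_singleton (𝕜 := ℂ) M
    rwa [Algebra.adjoin_singleton_eq_range_aeval] at this
  rintro _ hc
  rw [← hp, spectrum.map_polynomial_aeval] at hc
  obtain ⟨μ, hμ, rfl⟩ := hc
  refine ⟨μ, hμ, ?_⟩
  rw [← spectrum_toLin', ← Module.End.hasEigenvalue_iff_mem_spectrum] at hμ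
  obtain ⟨v, hv⟩ := hμ.exists_hasEigenvector
  have hexp := exp_mulVec_of_mulVec_eq_smul (M := M) (by simpa using hv.apply_eq_smul)
  have hpoly := Module.End.aeval_apply_of_hasEigenvector (p := p) hv
  have htoLin : Polynomial.aeval (toLin' M) p = toLin' (Polynomial.aeval M p) :=
    Polynomial.aeval_algHom_apply (toLinAlgEquiv' : Matrix n n ℂ ≃ₐ[ℂ] _).toAlgHom M p
  rw [htoLin, hp, toLin'_apply, hexp] at hpoly
  exact smul_left_injective ℂ hv.2 hpoly

theorem spectralRadius_exp_lt_one [Nonempty n] {M : Matrix n n ℂ}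
    (hM : ∀ μ ∈ spectrum ℂ M, μ.re < 0) : spectralRadius ℂ (exp M) < 1 := by
  have hlt : ∀ z ∈ spectrum ℂ (exp M), ‖z‖₊ < 1 := by
    rintro _ hz
    obtain ⟨μ, hμ, rfl⟩ := spectrum_exp_subset M hz
    rw [← NNReal.coe_lt_coe, coe_nnnorm, Complex.norm_exp, NNReal.coe_one, Real.exp_lt_one_iff]
    exact hM μ hμ
  simpa using spectrum.spectralRadius_lt_of_forall_lt (exp M) hlt

theorem exp_smul_add_algebraMap (M : Matrix n n ℂ) (α t : ℝ) :
    exp (t • (M + algebraMap ℂ _ (α : ℂ))) = Real.exp (α * t) • exp (t • M) := by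
  have hsplit :
      t • (M + algebraMap ℂ _ (α : ℂ)) = t • M + algebraMap ℂ _ ((α * t : ℝ) : ℂ) := by
    rw [smul_add, Algebra.algebraMap_eq_smul_one, Algebra.algebraMap_eq_smul_one, ← smul_assoc,
      Complex.real_smul, Complex.ofReal_mul, mul_comm]
  have hscalar (z : ℂ) : exp (algebraMap ℂ (Matrix n n ℂ) z) = algebraMap ℂ _ (exp z) :=
    (algebraMap_exp_comm z).symm
  rw [hsplit, Matrix.exp_add_of_commute _ _ (Algebra.commute_algebraMap_right _ _), hscalar,
    Algebra.algebraMap_eq_smul_one, mul_smul_comm, mul_one, ← Complex.exp_eq_exp_ℂ,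
    ← Complex.ofReal_exp, Complex.coe_smul]

theorem isBigO_exp_smul_of_forall_re_lt_zero (M : Matrix n n ℂ)
    (hM : ∀ μ ∈ spectrum ℂ M, μ.re < 0) :
    ∃ α > 0, (fun t : ℝ => exp (t • M)) =O[atTop] fun t => Real.exp (-α * t) := by
  cases isEmpty_or_nonempty n
  · exact ⟨1, one_pos, (isBigO_zero _ _).congr_left fun _ => Subsingleton.elim _ _⟩
  obtain ⟨μ₀, hμ₀, hmax⟩ := (spectrum.isCompact M).exists_isMaxOn (spectrum.nonempty M)
    Complex.continuous_re.continuousOn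
  obtain ⟨α, hα, hμ₀α⟩ : ∃ α : ℝ, 0 < α ∧ μ₀.re + α < 0 :=
    ⟨-μ₀.re / 2, by linarith [hM μ₀ hμ₀], by linarith [hM μ₀ hμ₀]⟩
  set B := M + algebraMap ℂ _ (α : ℂ) with hB
  have hshift : ∀ ν ∈ spectrum ℂ B, ν.re < 0 := by
    rw [← spectrum.add_singleton_eq]
    rintro _ ⟨μ, hμ, _, rfl, rfl⟩
    have : μ.re ≤ μ₀.re := hmax hμ
    simp only [Complex.add_re, Complex.ofReal_re]
    linarith
  have hρ : spectralRadius ℂ (exp B) < 1 := spectralRadius_exp_lt_one hshift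
  have hbdd := bddAbove_norm_pow_of_spectralRadius_lt_one hρ
  obtain ⟨C, hC⟩ := exists_norm_exp_smul_le_of_bddAbove_norm_pow hbdd
  refine ⟨α, hα, .of_bound C ?_⟩
  filter_upwards [eventually_ge_atTop 0] with t ht
  have hbound : ‖exp (t • B)‖ ≤ C := hC t ht
  rw [hB, exp_smul_add_algebraMap, norm_smul, Real.norm_of_nonneg (Real.exp_pos _).le] at hbound
  rw [Real.norm_of_nonneg (Real.exp_pos _).le, neg_mul, Real.exp_neg, ← div_eq_mul_inv,
    le_div_iff₀ (Real.exp_pos _), mul_comm]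
  exact hbound

theorem map_algebraMap_exp (Λ : Matrix n n ℝ) :
    (exp Λ).map (algebraMap ℝ ℂ) = exp (Λ.map (algebraMap ℝ ℂ)) :=
  map_exp (algebraMap ℝ ℂ).mapMatrix (continuous_id.matrix_map Complex.continuous_ofReal) Λ

theorem IsHurwitz.isBigO_exp_smul {Λ : Matrix n n ℝ} (hΛ : Λ.IsHurwitz) :
    ∃ α > 0, (fun t : ℝ => exp (t • Λ)) =O[atTop] fun t => Real.exp (-α * t) := by
  obtain ⟨α, hα, h⟩ := isBigO_exp_smul_of_forall_re_lt_zero _ hΛ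
  refine ⟨α, hα, ?_⟩
  rw [← isBigO_norm_left] at h ⊢
  convert h using 2 with t
  rw [← linfty_opNorm_map_eq _ (algebraMap ℝ ℂ) Complex.norm_real, map_algebraMap_exp]
  congr 2
  ext
  simp

end ExpDecay

end Matrix

section ImproperIntegral

theorem integrableOn_Ioi_of_isBigO_exp_neg {E : Type*} [NormedAddCommGroup E] {f : ℝ → E}
    {a b : ℝ} (hb : 0 < b) (hf : ContinuousOn f (Ici a))
    (ho : f =O[atTop] fun t => Real.exp (-b * t)) : IntegrableOn f (Ioi a) :=
  integrableOn_Ici_iff_integrableOn_Ioi (by finiteness) |>.mp <|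
    (hf.locallyIntegrableOn measurableSet_Ici).integrableOn_of_isBigO_atTop
    ho ⟨Ioi b, Ioi_mem_atTop b, exp_neg_integrableOn_Ioi b hb⟩

variable {E : Type*} [NormedAddCommGroup E] [NormedSpace ℝ E] [CompleteSpace E]

theorem ContinuousLinearMap.map_integral_Ioi_eq_neg_of_hasDerivAt (L : E →L[ℝ] E) {f : ℝ → E}
    {a : ℝ} (hderiv : ∀ t, HasDerivAt f (L (f t)) t) (hf : IntegrableOn f (Ioi a))
    (hlim : Tendsto f atTop (𝓝 0)) : L (∫ t in Ioi a, f t) = -f a := by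
  rw [← L.integral_comp_comm hf, integral_Ioi_of_hasDerivAt_of_tendsto' (fun t _ => hderiv t)
    (L.integrable_comp hf) hlim, zero_sub]

theorem ContinuousLinearMap.map_integral_pos {X : Type*} [MeasurableSpace X] {μ : Measure X}
    (L : E →L[ℝ] ℝ) {f : X → E} (hμ : μ ≠ 0) (hf : Integrable f μ) (hpos : ∀ x, 0 < L (f x)) :
    0 < L (∫ x, f x ∂μ) := by
  have hsupp : Function.support (fun x => L (f x)) = univ :=
    eq_univ_of_forall fun x => (hpos x).ne'
  rw [← L.integral_comp_comm hf,
    integral_pos_iff_support_of_nonneg (fun x => (hpos x).le) (L.integrable_comp hf), hsupp]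
  exact Measure.measure_univ_pos.2 hμ

end ImproperIntegral

namespace Matrix

variable {n : Type*} [Fintype n] [DecidableEq n]

noncomputable def lyapunovIntegrand (Λ Q : Matrix n n ℝ) (t : ℝ) : Matrix n n ℝ :=
  exp (t • Λᵀ) * Q * exp (t • Λ)

/- `HasDerivAt` sees the norm only through the topology (`slope`), which the entrywise sup norm
and the operator norm share, so the derivative computed in the normed algebra transfers. -/
theorem hasDerivAt_lyapunovIntegrand (Λ Q : Matrix n n ℝ) (t : ℝ) :
    HasDerivAt (lyapunovIntegrand Λ Q)
      (Λᵀ * lyapunovIntegrand Λ Q t + lyapunovIntegrand Λ Q t * Λ) t :=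
  hasDerivAt_iff_tendsto_slope.2 <| hasDerivAt_iff_tendsto_slope.1 <|
    open scoped Norms.Operator in hasDerivAt_exp_smul_mul_mul_exp_smul Λᵀ Q Λ t

theorem continuous_lyapunovIntegrand (Λ Q : Matrix n n ℝ) : Continuous (lyapunovIntegrand Λ Q) :=
  continuous_iff_continuousAt.2 fun t => (hasDerivAt_lyapunovIntegrand Λ Q t).continuousAt

theorem IsHurwitz.isBigO_lyapunovIntegrand {Λ : Matrix n n ℝ} (hΛ : Λ.IsHurwitz)
    (Q : Matrix n n ℝ) :
    ∃ α > 0, lyapunovIntegrand Λ Q =O[atTop] fun t => Real.exp (-α * t) := by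
  obtain ⟨α, hα, hT⟩ := hΛ.transpose.isBigO_exp_smul
  obtain ⟨β, hβ, h⟩ := hΛ.isBigO_exp_smul
  have hexp (t : ℝ) : Real.exp (-α * t) * 1 * Real.exp (-β * t) = Real.exp (-(α + β) * t) := by
    rw [mul_one, ← Real.exp_add]
    ring_nf
  -- The product estimate needs the submultiplicative operator norm; `isBigO_pi` brings it back
  -- to the entrywise norm.
  have hprod := open scoped Norms.Operator in
    ((hT.mul (isBigO_const_const Q one_ne_zero atTop)).mul h).congr_right hexp
  exact ⟨α + β, by positivity, isBigO_pi.2 fun i => isBigO_pi.2 (hprod.matrix_apply i)⟩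

theorem IsHurwitz.transpose_mul_integral_add_integral_mul {Λ : Matrix n n ℝ}
    (hΛ : Λ.IsHurwitz) (Q : Matrix n n ℝ) :
    Λᵀ * (∫ t in Ioi (0 : ℝ), lyapunovIntegrand Λ Q t) +
      (∫ t in Ioi (0 : ℝ), lyapunovIntegrand Λ Q t) * Λ = -Q := by
  obtain ⟨α, hα, hO⟩ := hΛ.isBigO_lyapunovIntegrand Q
  have hint := integrableOn_Ioi_of_isBigO_exp_neg (a := 0) hα
    (continuous_lyapunovIntegrand Λ Q).continuousOn hO
  have hlim := hO.trans_tendsto <|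
    Real.tendsto_exp_atBot.comp (tendsto_id.const_mul_atTop_of_neg (neg_lt_zero.2 hα))
  let L : Matrix n n ℝ →L[ℝ] Matrix n n ℝ :=
    (LinearMap.mulLeft ℝ Λᵀ + LinearMap.mulRight ℝ Λ).toContinuousLinearMap
  have := L.map_integral_Ioi_eq_neg_of_hasDerivAt (hasDerivAt_lyapunovIntegrand Λ Q) hint hlim
  rwa [show lyapunovIntegrand Λ Q 0 = Q by simp [lyapunovIntegrand]] at this

theorem PosDef.lyapunovIntegrand {Q : Matrix n n ℝ} (hQ : Q.PosDef) (Λ : Matrix n n ℝ) (t : ℝ) :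
    (lyapunovIntegrand Λ Q t).PosDef := by
  have h := hQ.conjTranspose_mul_mul_same (mulVec_injective_iff_isUnit.2 (isUnit_exp (t • Λ)))
  rwa [conjTranspose_eq_transpose_of_trivial, ← exp_transpose, transpose_smul] at h

theorem IsHurwitz.posDef_integral_lyapunovIntegrand {Λ Q : Matrix n n ℝ} (hΛ : Λ.IsHurwitz)
    (hQ : Q.PosDef) : (∫ t in Ioi (0 : ℝ), lyapunovIntegrand Λ Q t).PosDef := by
  obtain ⟨α, hα, hO⟩ := hΛ.isBigO_lyapunovIntegrand Q
  have hint := integrableOn_Ioi_of_isBigO_exp_neg (a := 0) hα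
    (continuous_lyapunovIntegrand Λ Q).continuousOn hO
  refine .of_dotProduct_mulVec_pos ?_ fun v hv => ?_
  · rw [isHermitian_iff_isSymm, IsSymm]
    let T := (transposeLinearEquiv n n ℝ ℝ).toContinuousLinearEquiv
    calc _ = ∫ t in Ioi (0 : ℝ), T (lyapunovIntegrand Λ Q t) := (T.integral_comp_comm _).symm
      _ = _ := by
        congr with t : 1
        exact isHermitian_iff_isSymm.1 (hQ.lyapunovIntegrand Λ t).isHermitian
  · let q : Matrix n n ℝ →L[ℝ] ℝ := LinearMap.toContinuousLinearMap
      (LinearMap.applyₗ v ∘ₗ LinearMap.applyₗ (star v) ∘ₗ (toLinearMap₂' ℝ).toLinearMap)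
    have hq (X : Matrix n n ℝ) : q X = star v ⬝ᵥ X *ᵥ v := toLinearMap₂'_apply' X _ _
    rw [← hq]
    exact q.map_integral_pos (by simp) hint fun t =>
      ((hQ.lyapunovIntegrand Λ t).dotProduct_mulVec_pos hv).trans_eq (hq _).symm

end Matrix

theorem hurwitz_lyapunov_equation_solvable_general
    {N : ℕ} (Λ : Matrix (Fin N) (Fin N) ℝ)
    (hΛ : ∀ μ ∈ spectrum ℂ (Λ.map (algebraMap ℝ ℂ)), μ.re < 0)
    (Qbar : Matrix (Fin N) (Fin N) ℝ) (hQbar : Qbar.PosDef) :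
    ∃ Pbar : Matrix (Fin N) (Fin N) ℝ,
      Pbar.IsSymm ∧ Pbar.PosDef ∧ Λᵀ * Pbar + Pbar * Λ = -Qbar ∧
      Pbar = ∫ t in Set.Ioi (0 : ℝ),
        NormedSpace.exp (t • Λᵀ) * Qbar * NormedSpace.exp (t • Λ) := by
  have hP := IsHurwitz.posDef_integral_lyapunovIntegrand hΛ hQbar
  exact ⟨_, isHermitian_iff_isSymm.1 hP.isHermitian, hP,
    IsHurwitz.transpose_mul_integral_add_integral_mul hΛ Qbar, rfl⟩

/-- If `Λ ∈ ℝ^{N×N}` is Hurwitz (every complex eigenvalue has strictly negative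
real part), then for every symmetric positive definite `Q̄` there exists a
symmetric positive definite `P̄` satisfying the Lyapunov equation
`ΛᵀP̄ + P̄Λ = -Q̄`; one such solution is `P̄ = ∫₀^∞ exp(Λᵀt) Q̄ exp(Λt) dt`. -/
theorem hurwitz_lyapunov_equation_solvable
    {N : ℕ} (Λ : Matrix (Fin N) (Fin N) ℝ)
    (hΛ : ∀ μ ∈ spectrum ℂ (Λ.map (algebraMap ℝ ℂ)), μ.re < 0)
    (Qbar : Matrix (Fin N) (Fin N) ℝ) (hQbarSym : Qbar.IsSymm) (hQbar : Qbar.PosDef) :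
    ∃ Pbar : Matrix (Fin N) (Fin N) ℝ,
      Pbar.IsSymm ∧ Pbar.PosDef ∧ Λᵀ * Pbar + Pbar * Λ = -Qbar ∧
      Pbar = ∫ t in Set.Ioi (0 : ℝ),
        NormedSpace.exp (t • Λᵀ) * Qbar * NormedSpace.exp (t • Λ) :=
  hurwitz_lyapunov_equation_solvable_general Λ hΛ Qbar hQbar
end

section
/- Persistent excitation implies parameter convergence for the gradient flow: suppose the regressor φ : [0,∞) → ℝ^N is bounded and continuous and is persistently exciting, i.e., there exist T₀ > 0 and α₀ > 0 such that for all t ≥ 0 and all unit vectors v ∈ ℝ^N, ∫_t^{t+T₀} (vᵀφ(s))² ds ≥ α₀. Then for any γ > 0 and any initial condition, the solution of θ̇(t) = −γ e_y(t) φ(t) with e_y(t) = ⟨θ(t) − θ*, φ(t)⟩ satisfies θ(t) → θ* as t → ∞ (the parameter error θ̃(t) = θ(t) − θ* converges to zero). -/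
/-!
Along the flow, `V = ‖θ - θ*‖²` satisfies `V' = -2γ e_y²`, so it decreases by `2γ ∫ e_y²` over
each window `[t, t + T₀]`. Over such a window `θ` moves by at most `γ B ∫ |e_y|`, hence
(Cauchy–Schwarz) by `O(√(∫ e_y²))`; so `⟪θ(t) - θ*, φ(s)⟫` differs from `e_y(s)` by that much, and
persistent excitation gives `α₀ V(t) ≤ C ∫ e_y²` with `C = 2 + 2γ²B⁴T₀²`. Thus
`V(t + T₀) ≤ (1 - 2γα₀/C) V(t)`, and `V` decays geometrically.
-/

open scoped RealInnerProductSpace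

open Filter Set intervalIntegral

theorem sq_intervalIntegral_le_mul_integral_sq {f : ℝ → ℝ} {a b : ℝ} (hab : a ≤ b)
    (hf : ContinuousOn f (Icc a b)) :
    (∫ u in a..b, f u) ^ 2 ≤ (b - a) * ∫ u in a..b, f u ^ 2 := by
  rw [← uIcc_of_le hab] at hf
  have hf1 : IntervalIntegrable f MeasureTheory.volume a b := hf.intervalIntegrable
  have hf2 : IntervalIntegrable (fun u => f u ^ 2) MeasureTheory.volume a b :=
    (hf.pow 2).intervalIntegrable
  have hquad : ∀ c : ℝ,
      0 ≤ (b - a) * (c * c) + (-2 * ∫ u in a..b, f u) * c + ∫ u in a..b, f u ^ 2 := by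
    intro c
    calc 0 ≤ ∫ u in a..b, (c ^ 2 + (-2 * c) * f u + f u ^ 2) :=
          integral_nonneg hab fun u _ => by nlinarith [sq_nonneg (c - f u)]
      _ = _ := by
          rw [integral_add (intervalIntegrable_const.add (hf1.const_mul _)) hf2,
            integral_add intervalIntegrable_const (hf1.const_mul _),
            integral_const, integral_const_mul, smul_eq_mul]
          ring
  have := discrim_le_zero hquad
  rw [discrim] at this
  linarith

section GradientFlow

variable {E : Type*} [NormedAddCommGroup E] [InnerProductSpace ℝ E] {γ B : ℝ} {φ x : ℝ → E}

theorem mul_norm_sq_le_integral_inner_sq {α a b : ℝ}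
    (hPE : ∀ v : E, ‖v‖ = 1 → α ≤ ∫ s in a..b, ⟪v, φ s⟫ ^ 2) (w : E) :
    α * ‖w‖ ^ 2 ≤ ∫ s in a..b, ⟪w, φ s⟫ ^ 2 := by
  rcases eq_or_ne w 0 with rfl | hw
  · simp
  have hscale : ∫ s in a..b, ⟪w, φ s⟫ ^ 2 = ‖w‖ ^ 2 * ∫ s in a..b, ⟪‖w‖⁻¹ • w, φ s⟫ ^ 2 := by
    rw [← integral_const_mul]
    congr 1 with s
    rw [real_inner_smul_left]
    field_simp
  rw [hscale, mul_comm]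
  exact mul_le_mul_of_nonneg_left (hPE _ (norm_smul_inv_norm hw)) (by positivity)

/-- `x` plays the parameter error `θ - θ*`, so that `⟪x t, φ t⟫` is the output error `e_y t`. -/
def IsErrorFlow (γ : ℝ) (φ x : ℝ → E) : Prop :=
  ∀ t, 0 ≤ t → HasDerivAt x (-(γ * ⟪x t, φ t⟫) • φ t) t

namespace IsErrorFlow

theorem continuousOn_inner (hx : IsErrorFlow γ φ x) (hφ : Continuous φ) :
    ContinuousOn (fun t => ⟪x t, φ t⟫) (Ici 0) :=
  fun t ht => ((hx t ht).continuousAt.inner hφ.continuousAt).continuousWithinAt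

theorem norm_sq_eq_sub_integral (hx : IsErrorFlow γ φ x) (hφ : Continuous φ) {s t : ℝ}
    (hs : 0 ≤ s) (hst : s ≤ t) :
    ‖x t‖ ^ 2 = ‖x s‖ ^ 2 - 2 * γ * ∫ u in s..t, ⟪x u, φ u⟫ ^ 2 := by
  have hderiv : ∀ u ∈ uIcc s t, HasDerivAt (‖x ·‖ ^ 2) (-(2 * γ) * ⟪x u, φ u⟫ ^ 2) u := by
    intro u hu
    rw [uIcc_of_le hst] at hu
    convert (hx u (hs.trans hu.1)).norm_sq using 1
    rw [real_inner_smul_right]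
    ring
  have he : ContinuousOn (fun u => ⟪x u, φ u⟫) (uIcc s t) :=
    (hx.continuousOn_inner hφ).mono fun u hu => hs.trans (uIcc_of_le hst ▸ hu).1
  have hftc := integral_eq_sub_of_hasDerivAt hderiv
    (continuousOn_const.mul (he.pow 2)).intervalIntegrable
  rw [integral_const_mul] at hftc
  linarith

theorem antitoneOn_norm_sq (hx : IsErrorFlow γ φ x) (hγ : 0 ≤ γ) (hφ : Continuous φ) :
    AntitoneOn (fun t => ‖x t‖ ^ 2) (Ici 0) := by
  intro s hs t _ hst
  dsimp only
  rw [hx.norm_sq_eq_sub_integral hφ hs hst]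
  exact sub_le_self _ <| mul_nonneg (by positivity) <| integral_nonneg hst fun u _ => sq_nonneg _

theorem norm_sub_le_mul_integral_abs_inner [CompleteSpace E] (hx : IsErrorFlow γ φ x)
    (hγ : 0 ≤ γ) (hφ : Continuous φ) (hB : ∀ t, 0 ≤ t → ‖φ t‖ ≤ B)
    {s t : ℝ} (hs : 0 ≤ s) (hst : s ≤ t) :
    ‖x t - x s‖ ≤ γ * B * ∫ u in s..t, |⟪x u, φ u⟫| := by
  have he : ContinuousOn (fun u => ⟪x u, φ u⟫) (uIcc s t) :=
    (hx.continuousOn_inner hφ).mono fun u hu => hs.trans (uIcc_of_le hst ▸ hu).1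
  rw [← integral_eq_sub_of_hasDerivAt
      (fun u hu => hx u (hs.trans (uIcc_of_le hst ▸ hu).1))
      ((continuousOn_const.mul he).neg.smul hφ.continuousOn).intervalIntegrable,
    ← integral_const_mul]
  refine norm_integral_le_of_norm_le hst (Eventually.of_forall fun u hu => ?_)
    (continuousOn_const.mul he.abs).intervalIntegrable
  rw [norm_smul, norm_neg, norm_mul, Real.norm_of_nonneg hγ, Real.norm_eq_abs]
  calc γ * |⟪x u, φ u⟫| * ‖φ u‖ ≤ γ * |⟪x u, φ u⟫| * B := by
        gcongr; exact hB u (hs.trans hu.1.le)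
    _ = γ * B * |⟪x u, φ u⟫| := by ring

theorem norm_sub_sq_le_integral_inner_sq [CompleteSpace E] (hx : IsErrorFlow γ φ x)
    (hγ : 0 ≤ γ) (hφ : Continuous φ) (hB : ∀ t, 0 ≤ t → ‖φ t‖ ≤ B)
    {t T s : ℝ} (ht : 0 ≤ t) (hs : s ∈ Icc t (t + T)) :
    ‖x s - x t‖ ^ 2 ≤ γ ^ 2 * B ^ 2 * T * ∫ u in t..t + T, ⟪x u, φ u⟫ ^ 2 := by
  have hB0 : 0 ≤ B := (norm_nonneg _).trans (hB 0 le_rfl)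
  have he : ContinuousOn (fun u => ⟪x u, φ u⟫) (Icc t (t + T)) :=
    (hx.continuousOn_inner hφ).mono fun u hu => ht.trans hu.1
  have hsub : ∫ u in t..s, |⟪x u, φ u⟫| ≤ ∫ u in t..t + T, |⟪x u, φ u⟫| :=
    integral_mono_interval le_rfl hs.1 hs.2 (Eventually.of_forall fun u => abs_nonneg _)
      (he.abs.intervalIntegrable_of_Icc (hs.1.trans hs.2))
  have hCS := sq_intervalIntegral_le_mul_integral_sq (hs.1.trans hs.2) he.abs
  simp only [sq_abs, add_sub_cancel_left] at hCS
  calc ‖x s - x t‖ ^ 2 ≤ (γ * B * ∫ u in t..t + T, |⟪x u, φ u⟫|) ^ 2 := by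
        gcongr
        exact (hx.norm_sub_le_mul_integral_abs_inner hγ hφ hB ht hs.1).trans
          (mul_le_mul_of_nonneg_left hsub (by positivity))
    _ = γ ^ 2 * B ^ 2 * (∫ u in t..t + T, |⟪x u, φ u⟫|) ^ 2 := by ring
    _ ≤ _ := by rw [mul_assoc _ T]; gcongr

theorem mul_norm_sq_le_mul_integral_inner_sq [CompleteSpace E] {α T t : ℝ}
    (hx : IsErrorFlow γ φ x) (hγ : 0 ≤ γ) (hφ : Continuous φ) (hB : ∀ t, 0 ≤ t → ‖φ t‖ ≤ B)
    (hT : 0 ≤ T) (ht : 0 ≤ t)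
    (hPE : ∀ v : E, ‖v‖ = 1 → α ≤ ∫ s in t..t + T, ⟪v, φ s⟫ ^ 2) :
    α * ‖x t‖ ^ 2 ≤ (2 + 2 * γ ^ 2 * B ^ 4 * T ^ 2) * ∫ u in t..t + T, ⟪x u, φ u⟫ ^ 2 := by
  set J := ∫ u in t..t + T, ⟪x u, φ u⟫ ^ 2
  have htT : t ≤ t + T := by linarith
  have he : ContinuousOn (fun u => ⟪x u, φ u⟫) (Icc t (t + T)) :=
    (hx.continuousOn_inner hφ).mono fun u hu => ht.trans hu.1
  have he2 : IntervalIntegrable (fun u => ⟪x u, φ u⟫ ^ 2) MeasureTheory.volume t (t + T) :=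
    (he.pow 2).intervalIntegrable_of_Icc htT
  have hpoint : ∀ s ∈ Icc t (t + T),
      ⟪x t, φ s⟫ ^ 2 ≤ 2 * ⟪x s, φ s⟫ ^ 2 + 2 * (B ^ 2 * (γ ^ 2 * B ^ 2 * T * J)) := by
    intro s hs
    have hdrift : ⟪x t - x s, φ s⟫ ^ 2 ≤ B ^ 2 * (γ ^ 2 * B ^ 2 * T * J) := by
      calc ⟪x t - x s, φ s⟫ ^ 2 ≤ (‖x s - x t‖ * ‖φ s‖) ^ 2 := by
            rw [← sq_abs, norm_sub_rev]; gcongr; exact abs_real_inner_le_norm _ _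
        _ ≤ ‖x s - x t‖ ^ 2 * B ^ 2 := by rw [mul_pow]; gcongr; exact hB s (ht.trans hs.1)
        _ ≤ (γ ^ 2 * B ^ 2 * T * J) * B ^ 2 := by
            gcongr; exact hx.norm_sub_sq_le_integral_inner_sq hγ hφ hB ht hs
        _ = _ := by ring
    calc ⟪x t, φ s⟫ ^ 2 = (⟪x s, φ s⟫ + ⟪x t - x s, φ s⟫) ^ 2 := by rw [inner_sub_left]; ring
      _ ≤ _ := add_sq_le.trans (by linarith)
  calc α * ‖x t‖ ^ 2 ≤ ∫ s in t..t + T, ⟪x t, φ s⟫ ^ 2 := mul_norm_sq_le_integral_inner_sq hPE _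
    _ ≤ ∫ s in t..t + T, (2 * ⟪x s, φ s⟫ ^ 2 + 2 * (B ^ 2 * (γ ^ 2 * B ^ 2 * T * J))) :=
        integral_mono_on htT
          ((by fun_prop : Continuous fun s => ⟪x t, φ s⟫ ^ 2).intervalIntegrable _ _)
          ((he2.const_mul 2).add intervalIntegrable_const) hpoint
    _ = (2 + 2 * γ ^ 2 * B ^ 4 * T ^ 2) * J := by
        rw [integral_add (he2.const_mul 2) intervalIntegrable_const, integral_const_mul,
          integral_const, smul_eq_mul]
        ring

theorem norm_sq_add_le_mul_norm_sq [CompleteSpace E] {α T t : ℝ}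
    (hx : IsErrorFlow γ φ x) (hγ : 0 ≤ γ) (hφ : Continuous φ) (hB : ∀ t, 0 ≤ t → ‖φ t‖ ≤ B)
    (hT : 0 ≤ T) (ht : 0 ≤ t)
    (hPE : ∀ v : E, ‖v‖ = 1 → α ≤ ∫ s in t..t + T, ⟪v, φ s⟫ ^ 2) :
    ‖x (t + T)‖ ^ 2 ≤ (1 - 2 * γ * α / (2 + 2 * γ ^ 2 * B ^ 4 * T ^ 2)) * ‖x t‖ ^ 2 := by
  have hC : 0 < 2 + 2 * γ ^ 2 * B ^ 4 * T ^ 2 := by positivity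
  have hexc := hx.mul_norm_sq_le_mul_integral_inner_sq hγ hφ hB hT ht hPE
  have hJ : α / (2 + 2 * γ ^ 2 * B ^ 4 * T ^ 2) * ‖x t‖ ^ 2 ≤ ∫ u in t..t + T, ⟪x u, φ u⟫ ^ 2 := by
    rwa [div_mul_eq_mul_div, div_le_iff₀ hC, mul_comm _ (2 + _)]
  rw [hx.norm_sq_eq_sub_integral hφ ht (by linarith)]
  linear_combination (2 * γ) * hJ

end IsErrorFlow

end GradientFlow

theorem tendsto_atTop_zero_of_antitoneOn_of_le_mul {V : ℝ → ℝ} {T q : ℝ} (hT : 0 < T)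
    (hq : q < 1) (hV : ∀ t, 0 ≤ V t) (hanti : AntitoneOn V (Ici 0))
    (hstep : ∀ t, 0 ≤ t → V (t + T) ≤ q * V t) :
    Tendsto V atTop (nhds 0) := by
  set r := max q 0
  have hgeo : ∀ n : ℕ, V (n * T) ≤ r ^ n * V 0 := by
    intro n
    induction n with
    | zero => simp
    | succ n ih =>
      calc V ((n + 1 : ℕ) * T) = V (n * T + T) := by push_cast; ring_nf
        _ ≤ r * V (n * T) := (hstep _ (by positivity)).trans
            (mul_le_mul_of_nonneg_right (le_max_left _ _) (hV _))
        _ ≤ r * (r ^ n * V 0) := mul_le_mul_of_nonneg_left ih (le_max_right _ _)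
        _ = r ^ (n + 1) * V 0 := by ring
  have hbound : Tendsto (fun t : ℝ => r ^ ⌊t / T⌋₊ * V 0) atTop (nhds 0) := by
    have hpow := (tendsto_pow_atTop_nhds_zero_of_lt_one (le_max_right q 0)
      (max_lt hq one_pos)).mul_const (V 0)
    rw [zero_mul] at hpow
    exact hpow.comp (tendsto_nat_floor_atTop.comp (tendsto_id.atTop_div_const hT))
  refine squeeze_zero' (Eventually.of_forall hV) ?_ hbound
  filter_upwards [eventually_ge_atTop 0] with t ht
  have hfloor : ⌊t / T⌋₊ * T ≤ t := (le_div_iff₀ hT).1 (Nat.floor_le (div_nonneg ht hT.le))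
  exact (hanti (by positivity : (0 : ℝ) ≤ ⌊t / T⌋₊ * T) ht hfloor).trans (hgeo _)

/-- Persistent excitation implies parameter convergence for the gradient flow:
if the regressor `φ` is bounded, continuous, and persistently exciting (there
exist `T₀ > 0`, `α₀ > 0` such that `∫_t^{t+T₀} ⟪v, φ(s)⟫² ds ≥ α₀` for every
`t ≥ 0` and every unit vector `v`), then for any `γ > 0` the solution of
`θ̇(t) = -γ e_y(t) φ(t)`, `e_y(t) = ⟪θ(t) - θ*, φ(t)⟫`, satisfies `θ(t) → θ*`
as `t → ∞`. -/
theorem persistent_excitation_parameter_convergence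
    {N : ℕ} (γ : ℝ) (hγ : 0 < γ)
    (θstar : EuclideanSpace ℝ (Fin N))
    (φ θ : ℝ → EuclideanSpace ℝ (Fin N))
    (hφcont : Continuous φ)
    (hφbdd : ∃ B : ℝ, ∀ t, 0 ≤ t → ‖φ t‖ ≤ B)
    (hPE : ∃ T₀ > (0 : ℝ), ∃ α₀ > (0 : ℝ), ∀ t, 0 ≤ t →
      ∀ v : EuclideanSpace ℝ (Fin N), ‖v‖ = 1 →
        α₀ ≤ ∫ s in t..(t + T₀), ⟪v, φ s⟫ ^ 2)
    (ey : ℝ → ℝ)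
    (hey : ∀ t, ey t = ⟪θ t - θstar, φ t⟫)
    (hθ : ∀ t, 0 ≤ t → HasDerivAt θ ((-(γ * ey t)) • φ t) t) :
    Filter.Tendsto (fun t => θ t - θstar) Filter.atTop (nhds 0) := by
  obtain ⟨B, hB⟩ := hφbdd
  obtain ⟨T₀, hT₀, α₀, hα₀, hPE⟩ := hPE
  have hx : IsErrorFlow γ φ (θ · - θstar) := fun t ht => by
    simpa only [hey] using (hθ t ht).sub_const θstar
  have hq : 1 - 2 * γ * α₀ / (2 + 2 * γ ^ 2 * B ^ 4 * T₀ ^ 2) < 1 := by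
    have : 0 < 2 * γ * α₀ / (2 + 2 * γ ^ 2 * B ^ 4 * T₀ ^ 2) := by positivity
    linarith
  have hanti := hx.antitoneOn_norm_sq hγ.le hφcont
  have hcontract := fun t ht =>
    hx.norm_sq_add_le_mul_norm_sq hγ.le hφcont hB hT₀.le ht (hPE t ht)
  have hV := tendsto_atTop_zero_of_antitoneOn_of_le_mul hT₀ hq (fun _ => sq_nonneg _) hanti
    hcontract
  rw [tendsto_zero_iff_norm_tendsto_zero]
  convert hV.sqrt using 2
  · exact (Real.sqrt_sq (norm_nonneg _)).symm
  · exact Real.sqrt_zero.symm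
end
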